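/- Over the atomic alphabet AT = {p}, the announcement formula ⟨p⟩⊤ is not equivalent to any purely propositional formula φ over AT: there is no propositional φ such that for every pointed Beth model (Θ, α), α forces ⟨p⟩⊤ iff α forces φ. -/

import Mathlib

/-! A propositional formula forced at the root of a Beth model is forced everywhere, and at a
maximal point whose only predecessors are itself and the root it is evaluated classically. In the
fork with `p` true on one leaf only, `⟨p⟩⊤` holds at the root, so a propositional equivalent `φ`
would be forced at the other leaf, i.e. be classically true under the all-false valuation. But at
the root of the one-point model with that valuation, where `φ` is evaluated the same way,
`⟨p⟩⊤` fails. -/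

/-- Propositional formulas over atoms `At`. -/
inductive PForm (At : Type) : Type
  | atom : At → PForm At
  | and  : PForm At → PForm At → PForm At
  | or   : PForm At → PForm At → PForm At
  | imp  : PForm At → PForm At → PForm At
  | neg  : PForm At → PForm At

/-- A path through `α`: a maximal chain containing `α`. -/
def IsPath {Q : Type} [PartialOrder Q] (α : Q) (P : Set Q) : Prop :=
  α ∈ P ∧ IsChain (· ≤ ·) P ∧ ∀ P' : Set Q, IsChain (· ≤ ·) P' → P ⊆ P' → P' = P

/-- A bar for `α`: a set meeting every path through `α`. -/
def IsBar {Q : Type} [PartialOrder Q] (α : Q) (B : Set Q) : Prop :=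
  ∀ P : Set Q, IsPath α P → (B ∩ P).Nonempty

/-- A Beth model: a rooted poset with a monotone assignment of sets of atoms. -/
structure Beth (At : Type) where
  Q : Type
  [ord : PartialOrder Q]
  root : Q
  root_le : ∀ β : Q, root ≤ β
  F : Q → Set At
  F_mono : ∀ {a b : Q}, a ≤ b → F a ⊆ F b

attribute [instance] Beth.ord

/-- Beth forcing. -/
def Beth.force {At : Type} (Θ : Beth At) : PForm At → Θ.Q → Prop
  | .atom p, α => ∃ B, IsBar α B ∧ ∀ β ∈ B, p ∈ Θ.F β
  | .and A B, α => Θ.force A α ∧ Θ.force B α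
  | .or A B, α => ∃ Bb, IsBar α Bb ∧ ∀ β ∈ Bb, Θ.force A β ∨ Θ.force B β
  | .imp A B, α => ∀ β, α ≤ β → Θ.force A β → Θ.force B β
  | .neg A, α => ∀ β, α ≤ β → ¬ Θ.force A β

def PForm.eval {At : Type} (v : At → Prop) : PForm At → Prop
  | .atom p => v p
  | .and A B => A.eval v ∧ B.eval v
  | .or A B => A.eval v ∨ B.eval v
  | .imp A B => A.eval v → B.eval v
  | .neg A => ¬ A.eval v

section Bars

variable {Q : Type} [PartialOrder Q]

theorem IsPath.mem_of_forall_le {α γ : Q} {P : Set Q} (hP : IsPath α P)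
    (hγ : ∀ δ ∈ P, γ ≤ δ) : γ ∈ P := by
  have hchain : IsChain (· ≤ ·) (insert γ P) :=
    hP.2.1.insert fun δ hδ _ => Or.inl (hγ δ hδ)
  rw [← hP.2.2 _ hchain (Set.subset_insert _ _)]
  exact Set.mem_insert _ _

theorem IsBar.of_forall_le {r : Q} (hr : ∀ β, r ≤ β) {B : Set Q} (hB : IsBar r B) (β : Q) :
    IsBar β B := fun P hP =>
  hB P ⟨hP.mem_of_forall_le fun δ _ => hr δ, hP.2.1, hP.2.2⟩

theorem isBar_singleton (α : Q) : IsBar α {α} :=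
  fun _ hP => ⟨α, rfl, hP.1⟩

theorem IsBar.exists_mem_comparable {α : Q} {B : Set Q} (hB : IsBar α B) :
    ∃ β ∈ B, β ≤ α ∨ α ≤ β := by
  obtain ⟨P, ⟨hchain, hmax⟩, hαP⟩ := (IsChain.singleton (r := (· ≤ ·)) (a := α)).exists_maxChain
  have hα : α ∈ P := hαP rfl
  obtain ⟨β, hβB, hβP⟩ := hB P ⟨hα, hchain, fun P' h' hsub => (hmax h' hsub).symm⟩
  refine ⟨β, hβB, ?_⟩
  rcases eq_or_ne β α with rfl | hne
  · exact Or.inl le_rfl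
  · exact hchain hβP hα hne

theorem IsBar.exists_mem_le_of_isMax {α : Q} (hα : IsMax α) {B : Set Q} (hB : IsBar α B) :
    ∃ β ∈ B, β ≤ α := by
  obtain ⟨β, hβB, hβα | hαβ⟩ := hB.exists_mem_comparable
  exacts [⟨β, hβB, hβα⟩, ⟨β, hβB, hα hαβ⟩]

end Bars

namespace Beth

variable {At : Type} (Θ : Beth At)

-- Only from the root: a maximal chain through `β` need not pass through a given `α ≤ β`.
theorem force_of_force_root {φ : PForm At} (h : Θ.force φ Θ.root) (β : Θ.Q) :
    Θ.force φ β := by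
  cases φ with
  | atom p =>
    obtain ⟨B, hB, hF⟩ := h
    exact ⟨B, hB.of_forall_le Θ.root_le β, hF⟩
  | and A B => exact ⟨force_of_force_root h.1 β, force_of_force_root h.2 β⟩
  | or A B =>
    obtain ⟨B', hB', hF⟩ := h
    exact ⟨B', hB'.of_forall_le Θ.root_le β, hF⟩
  | imp A B => exact fun δ _ hA => h δ (Θ.root_le δ) hA
  | neg A => exact fun δ _ hA => h δ (Θ.root_le δ) hA

theorem force_iff_eval_of_isMax {β : Θ.Q} (hβ : IsMax β)
    (hbelow : ∀ γ ≤ β, γ = Θ.root ∨ γ = β) (φ : PForm At) :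
    Θ.force φ β ↔ φ.eval (· ∈ Θ.F β) := by
  have hup : ∀ γ, β ≤ γ → γ = β := fun γ h => (le_antisymm h (hβ h)).symm
  have hlift : ∀ {ψ : PForm At} {γ}, γ ≤ β → Θ.force ψ γ → Θ.force ψ β := by
    intro ψ γ hγ h
    rcases hbelow γ hγ with rfl | rfl
    exacts [Θ.force_of_force_root h β, h]
  induction φ with
  | atom p =>
    constructor
    · rintro ⟨B, hB, hF⟩
      obtain ⟨γ, hγB, hγβ⟩ := hB.exists_mem_le_of_isMax hβ
      exact Θ.F_mono hγβ (hF γ hγB)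
    · exact fun hp => ⟨{β}, isBar_singleton β, fun γ hγ => hγ ▸ hp⟩
  | and A B ihA ihB => exact and_congr ihA ihB
  | or A B ihA ihB =>
    constructor
    · rintro ⟨B', hB', hF⟩
      obtain ⟨γ, hγB, hγβ⟩ := hB'.exists_mem_le_of_isMax hβ
      exact (hF γ hγB).imp (fun h => ihA.1 (hlift hγβ h)) (fun h => ihB.1 (hlift hγβ h))
    · exact fun h => ⟨{β}, isBar_singleton β, fun γ hγ => hγ ▸ h.imp ihA.2 ihB.2⟩
  | imp A B ihA ihB =>
    constructor
    · exact fun h hA => ihB.1 (h β le_rfl (ihA.2 hA))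
    · intro h γ hγ
      rw [hup γ hγ]
      exact fun hA => ihB.2 (h (ihA.1 hA))
  | neg A ihA =>
    constructor
    · exact fun h hA => h β le_rfl (ihA.2 hA)
    · intro h γ hγ
      rw [hup γ hγ]
      exact fun hA => h (ihA.1 hA)

def single (V : Set At) : Beth At where
  Q := Unit
  root := ()
  root_le _ := le_rfl
  F _ := V
  F_mono _ := subset_rfl

theorem single_force_iff (V : Set At) (φ : PForm At) :
    (single V).force φ (single V).root ↔ φ.eval (· ∈ V) :=
  (single V).force_iff_eval_of_isMax (fun _ _ => le_rfl) (fun _ _ => Or.inl rfl) φ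

end Beth

inductive Fork
  | root
  | left
  | right

namespace Fork

instance : PartialOrder Fork where
  le a b := a = root ∨ a = b
  le_refl _ := Or.inr rfl
  le_trans a b c := by
    rintro (rfl | rfl) h
    exacts [Or.inl rfl, h]
  le_antisymm a b := by
    rintro (rfl | rfl) (h | h) <;> first | rfl | exact h.symm

theorem isMax_of_ne_root {a : Fork} (ha : a ≠ root) : IsMax a := by
  rintro b (rfl | rfl)
  exacts [absurd rfl ha, le_rfl]

end Fork

namespace Beth

variable {At : Type}

def fork (V : Set At) : Beth At where
  Q := Fork
  root := .root
  root_le _ := Or.inl rfl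
  F
    | .left => V
    | _ => ∅
  F_mono := by
    rintro a b (rfl | rfl)
    exacts [Set.empty_subset _, subset_rfl]

theorem fork_force_iff_of_ne_root (V : Set At) {β : Fork} (hβ : β ≠ .root) (φ : PForm At) :
    (fork V).force φ β ↔ φ.eval (· ∈ (fork V).F β) :=
  (fork V).force_iff_eval_of_isMax (Fork.isMax_of_ne_root hβ) (fun _ h => h) φ

end Beth

/-- over the single-atom alphabet, the announceability formula
`⟨p⟩⊤` — i.e. "the point does not force `¬p`" — is not equivalent to any purely
propositional formula over that alphabet. -/
theorem announce_top_not_propositional :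
    ¬ ∃ φ : PForm Unit,
      ∀ Θ : Beth Unit,
        (¬ Θ.force (.neg (.atom ())) Θ.root) ↔ Θ.force φ Θ.root := by
  rintro ⟨φ, hφ⟩
  have hfork : (Beth.fork Set.univ).force φ .root := by
    refine (hφ _).1 fun hneg => hneg .left (Or.inl rfl) ?_
    exact (Beth.fork_force_iff_of_ne_root Set.univ Fork.noConfusion _).2 trivial
  have hφ_false : φ.eval (· ∈ (∅ : Set Unit)) :=
    (Beth.fork_force_iff_of_ne_root Set.univ Fork.noConfusion φ).1
      ((Beth.fork Set.univ).force_of_force_root hfork .right)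
  exact (hφ (Beth.single ∅)).2 ((Beth.single_force_iff ∅ φ).2 hφ_false)
    ((Beth.single_force_iff ∅ _).2 id)
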